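/- arXiv:2212.11653 — 6 statements merged into one kernel-verified Lean document; each statement's English description precedes it below -/
import Mathlib

section
/- If G is a connected graph, then the diameter of G is at most the neighborhood diversity of G. -/
/-- Two vertices are nd-equivalent if they have the same neighborhoods,
except possibly for themselves. -/
def ndRel {V : Type*} (G : SimpleGraph V) (u v : V) : Prop :=
  G.neighborSet u \ {v} = G.neighborSet v \ {u}

/-- The neighborhood diversity of `G`: the number of nd-equivalence classes. -/
noncomputable def ndCount {V : Type*} (G : SimpleGraph V) : ℕ :=
  {S : Set V | ∃ v, S = {u | ndRel G u v}}.ncard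

private lemma myLengthDrop {V : Type*} {G : SimpleGraph V} {u v : V}
    (p : G.Walk u v) (n : ℕ) : (p.drop n).length = p.length - n := by
  induction p generalizing n with
  | nil => simp [SimpleGraph.Walk.drop]
  | cons h q ih =>
    cases n with
    | zero => simp [SimpleGraph.Walk.drop]
    | succ n => simp [SimpleGraph.Walk.drop, ih]

private lemma distRight {V : Type*} {G : SimpleGraph V} {u v : V}
    (p : G.Walk u v) (b : ℕ) : G.dist (p.getVert b) v ≤ p.length - b := by
  have := SimpleGraph.dist_le (p.drop b)
  rwa [myLengthDrop] at this

private lemma distLeft {V : Type*} {G : SimpleGraph V} {u v : V}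
    (p : G.Walk u v) (a : ℕ) (ha : a ≤ p.length) : G.dist u (p.getVert a) ≤ a := by
  have h1 : p.reverse.getVert (p.length - a) = p.getVert a := by
    rw [SimpleGraph.Walk.getVert_reverse, Nat.sub_sub_self ha]
  have h2 := distRight p.reverse (p.length - a)
  rw [h1, SimpleGraph.Walk.length_reverse, Nat.sub_sub_self ha] at h2
  rwa [SimpleGraph.dist_comm]

/-- If `G` is connected, then the diameter of `G` is at most the
neighborhood diversity of `G`. -/
theorem diam_le_neighborhoodDiversity {V : Type*} [Fintype V]
    (G : SimpleGraph V) (hconn : G.Connected) :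
    G.diam ≤ ndCount G := by
  have hne : Nonempty V := hconn.nonempty
  obtain ⟨u, v, huv⟩ := G.exists_dist_eq_diam
  obtain ⟨p, hp⟩ := (hconn u v).exists_walk_length_eq_dist
  set d := G.diam with hd
  have hlen : p.length = d := by rw [hp, huv]
  -- the classes along the walk
  set cls : V → Set V := fun w => {x | ndRel G x w} with hcls
  set S : Set (Set V) := {S : Set V | ∃ v, S = {u | ndRel G u v}} with hS
  have hSfin : S.Finite := by
    have : S ⊆ Set.range cls := by
      rintro T ⟨w, rfl⟩; exact ⟨w, rfl⟩
    exact (Set.finite_range cls).subset this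
  -- key: vertices at positions 1..d along the walk lie in distinct classes
  have key : ∀ i j : ℕ, 1 ≤ i → i < j → j ≤ d → ¬ ndRel G (p.getVert i) (p.getVert j) := by
    intro i j hi hij hj hrel
    set w := p.getVert (i - 1) with hw
    have hi1 : i - 1 + 1 = i := Nat.succ_pred_eq_of_pos hi
    have hadj : G.Adj w (p.getVert i) := by
      have : i - 1 < p.length := by omega
      have := p.adj_getVert_succ this
      rwa [hi1] at this
    have hdl : G.dist u w ≤ i - 1 := distLeft p (i - 1) (by omega)
    have hdr : G.dist (p.getVert j) v ≤ d - j := by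
      have := distRight p j; rwa [hlen] at this
    have hne2 : w ≠ p.getVert j := by
      intro hwe
      have h3 : G.dist u v ≤ G.dist u w + G.dist w v := hconn.dist_triangle
      have h4 : G.dist w v ≤ d - j := by rw [hwe]; exact hdr
      omega
    have hmem : w ∈ G.neighborSet (p.getVert i) \ {p.getVert j} :=
      ⟨hadj.symm, hne2⟩
    rw [hrel] at hmem
    have hadj2 : G.Adj (p.getVert j) w := hmem.1
    have hwj : G.dist w (p.getVert j) ≤ 1 := SimpleGraph.dist_le hadj2.symm.toWalk
    have t1 : G.dist u v ≤ G.dist u w + G.dist w v := hconn.dist_triangle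
    have t2 : G.dist w v ≤ G.dist w (p.getVert j) + G.dist (p.getVert j) v :=
      hconn.dist_triangle
    omega
  -- build injective map
  have hrefl : ∀ x : V, ndRel G x x := fun x => rfl
  have hinj : Function.Injective (fun i : Fin d => cls (p.getVert (i.1 + 1))) := by
    intro a b hab
    simp only at hab
    by_contra hne3
    have hne4 : (a : ℕ) ≠ (b : ℕ) := fun h => hne3 (Fin.ext h)
    rcases Nat.lt_or_ge (a : ℕ) (b : ℕ) with h | h
    · have : p.getVert (a.1 + 1) ∈ cls (p.getVert (b.1 + 1)) := by
        rw [← hab]; exact hrefl _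
      exact key (a.1 + 1) (b.1 + 1) (by omega) (by omega) (by omega) this
    · have hlt : (b : ℕ) < (a : ℕ) := by omega
      have : p.getVert (b.1 + 1) ∈ cls (p.getVert (a.1 + 1)) := by
        rw [hab]; exact hrefl _
      exact key (b.1 + 1) (a.1 + 1) (by omega) (by omega) (by omega) this
  have hrangesub : ∀ i : Fin d, cls (p.getVert (i.1 + 1)) ∈ S :=
    fun i => ⟨p.getVert (i.1 + 1), rfl⟩
  haveI := hSfin.fintype
  have : Fintype.card (Fin d) ≤ Fintype.card S := by
    apply Fintype.card_le_of_injective (fun i => ⟨cls (p.getVert (i.1 + 1)), hrangesub i⟩)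
    intro a b hab
    exact hinj (congrArg Subtype.val hab)
  have hcard : S.ncard = Fintype.card S := by
    rw [Set.ncard_eq_toFinset_card', Set.toFinset_card]
  calc d = Fintype.card (Fin d) := (Fintype.card_fin d).symm
    _ ≤ Fintype.card S := this
    _ = S.ncard := hcard.symm
    _ = ndCount G := rfl
end

section
/- If P is a shortest path in a graph G containing at least four vertices, then no two distinct vertices of P are nd-equivalent; in particular P intersects each nd-equivalence class in at most one vertex. -/
/-!
Let `x = p_i` and `y = p_j` (`i < j`) be nd-equivalent vertices of a geodesic `p`. Every neighbour
of `x` is within distance one of `y`, and vice versa. With at least three edges, one of `x`, `y`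
has a path neighbour two or more steps along `p` away from the other one; but subpaths of a
geodesic are geodesics, so that neighbour is at distance at least two from it.
-/

open SimpleGraph

section

variable {V : Type*} {G : SimpleGraph V} {x y c : V}

theorem ndRel.symm (h : ndRel G x y) : ndRel G y x :=
  Eq.symm h

theorem ndRel.dist_le_one_of_adj (h : ndRel G x y) (hxc : G.Adj x c) : G.dist y c ≤ 1 := by
  by_cases hcy : c = y
  · simp [hcy]
  have hc : c ∈ G.neighborSet y \ {x} := h ▸ ⟨hxc, hcy⟩
  exact (dist_eq_one_iff_adj.mpr hc.1).le

end

namespace SimpleGraph.Walk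

variable {V : Type*} {G : SimpleGraph V} {u v : V}

theorem sub_le_dist_getVert (p : G.Walk u v) (hp : p.length = G.dist u v) {i j : ℕ}
    (hij : i ≤ j) (hj : j ≤ p.length) : j - i ≤ G.dist (p.getVert i) (p.getVert j) := by
  have hstart : G.dist u (p.getVert i) ≤ i := (dist_le (p.take i)).trans (by simp)
  have hend : G.dist (p.getVert j) v ≤ p.length - j := (dist_le (p.drop j)).trans (by simp)
  have htri : G.dist u v ≤
      G.dist u (p.getVert i) + (G.dist (p.getVert i) (p.getVert j) + G.dist (p.getVert j) v) :=
    ((p.take i).reachable.dist_triangle_left v).trans <| Nat.add_le_add_left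
      ((p.drop j).reachable.dist_triangle_right (p.getVert i)) _
  omega

theorem not_ndRel_getVert_of_lt (p : G.Walk u v) (hp : p.length = G.dist u v)
    (hlen : 3 ≤ p.length) {i j : ℕ} (hij : i < j) (hj : j ≤ p.length) :
    ¬ ndRel G (p.getVert i) (p.getVert j) := by
  intro hnd
  rcases i with _ | k
  · by_cases hjlen : j < p.length
    · have hnear := hnd.symm.dist_le_one_of_adj (p.adj_getVert_succ hjlen)
      have hfar := p.sub_le_dist_getVert hp (Nat.zero_le (j + 1)) hjlen
      omega
    · have hnear := hnd.dist_le_one_of_adj (p.adj_getVert_succ (i := 0) (by omega))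
      have hfar := p.sub_le_dist_getVert hp (i := 1) (by omega) hj
      rw [zero_add] at hnear
      rw [dist_comm] at hfar
      omega
  · have hnear := hnd.dist_le_one_of_adj (p.adj_getVert_succ (i := k) (by omega)).symm
    have hfar := p.sub_le_dist_getVert hp (i := k) (by omega) hj
    rw [dist_comm] at hfar
    omega

end SimpleGraph.Walk

theorem shortest_path_four_vertices_nd_distinct_general {V : Type*} (G : SimpleGraph V)
    {u v : V} (p : G.Walk u v) (hshort : p.length = G.dist u v)
    (h4 : 4 ≤ p.support.length) :
    ∀ a b, a ∈ p.support → b ∈ p.support → a ≠ b → ¬ ndRel G a b := by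
  intro a b ha hb hab
  have hlen : 3 ≤ p.length := by
    rw [Walk.length_support] at h4
    omega
  obtain ⟨i, rfl, hi⟩ := Walk.mem_support_iff_exists_getVert.mp ha
  obtain ⟨j, rfl, hj⟩ := Walk.mem_support_iff_exists_getVert.mp hb
  rcases lt_trichotomy i j with hij | rfl | hji
  · exact p.not_ndRel_getVert_of_lt hshort hlen hij hj
  · exact absurd rfl hab
  · exact fun hnd => p.not_ndRel_getVert_of_lt hshort hlen hji hi hnd.symm

/-- If `P` is a shortest path containing at least four vertices, then no two
distinct vertices of `P` are nd-equivalent (so `P` meets each nd-class at most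
once). -/
theorem shortest_path_four_vertices_nd_distinct {V : Type*} (G : SimpleGraph V)
    {u v : V} (p : G.Walk u v) (hp : p.IsPath) (hshort : p.length = G.dist u v)
    (h4 : 4 ≤ p.support.length) :
    ∀ a b, a ∈ p.support → b ∈ p.support → a ≠ b → ¬ ndRel G a b :=
  shortest_path_four_vertices_nd_distinct_general G p hshort h4
end

section
/- The length of a longest induced path in a connected graph G is at most the neighborhood diversity of G. -/
namespace SimpleGraph

variable {V : Type*} {G : SimpleGraph V}

lemma ndRel_comm {x y : V} : ndRel G x y ↔ ndRel G y x := eq_comm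

lemma not_ndRel_of_adj_of_not_adj {x y w : V} (hyw : G.Adj y w) (hxw : ¬ G.Adj x w)
    (hwx : w ≠ x) : ¬ ndRel G x y := by
  intro h
  have hw : w ∈ G.neighborSet y \ {x} := ⟨hyw, hwx⟩
  rw [ndRel] at h
  rw [← h] at hw
  exact hxw hw.1

lemma card_le_ndCount [Finite V] {ι : Type*} (f : ι → V)
    (hf : Pairwise fun i j => ¬ ndRel G (f i) (f j)) : Nat.card ι ≤ ndCount G := by
  let cls : ι → {S : Set V | ∃ v, S = {u | ndRel G u v}} :=
    fun i => ⟨{u | ndRel G u (f i)}, f i, rfl⟩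
  have hcls : Function.Injective cls := by
    intro i j hij
    by_contra hne
    have hcls_eq : {u | ndRel G u (f i)} = {u | ndRel G u (f j)} := congrArg Subtype.val hij
    have hmem : f i ∈ {u | ndRel G u (f i)} := rfl
    rw [hcls_eq] at hmem
    exact hf hne hmem
  exact (Nat.card_le_card_of_injective cls hcls).trans_eq (Nat.card_coe_set_eq _)

lemma Walk.not_ndRel_getVert {u v : V} {p : G.Walk u v} (hp : p.IsPath)
    (hind : ∀ i j, i + 1 < j → j ≤ p.length → ¬ G.Adj (p.getVert i) (p.getVert j))
    {i j : ℕ} (hij : i < j) (hj : j < p.length) :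
    ¬ ndRel G (p.getVert i) (p.getVert j) := by
  have hne : p.getVert (j + 1) ≠ p.getVert i := fun h => by
    have := hp.getVert_injOn (by simp only [Set.mem_ofPred_eq]; omega)
      (by simp only [Set.mem_ofPred_eq]; omega) h
    omega
  exact not_ndRel_of_adj_of_not_adj (p.adj_getVert_succ hj) (hind i (j + 1) (by omega) hj) hne

end SimpleGraph

open SimpleGraph in
theorem induced_path_length_le_nd_general {V : Type*} [Fintype V]
    (G : SimpleGraph V) {u v : V}
    (p : G.Walk u v) (hp : p.IsPath)
    (hind : ∀ i j : Fin p.support.length, (i : ℕ) + 1 < (j : ℕ) →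
      ¬ G.Adj (p.support.get i) (p.support.get j)) :
    p.length ≤ ndCount G := by
  have hind' : ∀ i j, i + 1 < j → j ≤ p.length → ¬ G.Adj (p.getVert i) (p.getVert j) := by
    intro i j hij hj
    have hlen := p.length_support
    simpa only [List.get_eq_getElem, Walk.support_getElem_eq_getVert] using
      hind ⟨i, by omega⟩ ⟨j, by omega⟩ hij
  have hdistinct : Pairwise fun i j : Fin p.length => ¬ ndRel G (p.getVert i) (p.getVert j) := by
    intro i j hne
    rcases lt_or_gt_of_ne (Fin.val_ne_of_ne hne) with h | h
    · exact Walk.not_ndRel_getVert hp hind' h j.isLt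
    · exact mt ndRel_comm.mp (Walk.not_ndRel_getVert hp hind' h i.isLt)
  simpa only [Nat.card_eq_fintype_card, Fintype.card_fin] using
    card_le_ndCount (fun i : Fin p.length => p.getVert i) hdistinct

/-- The length of any induced path in a connected graph `G` is at most the
neighborhood diversity of `G`. -/
theorem induced_path_length_le_nd {V : Type*} [Fintype V]
    (G : SimpleGraph V) (hconn : G.Connected) {u v : V}
    (p : G.Walk u v) (hp : p.IsPath)
    (hind : ∀ i j : Fin p.support.length, (i : ℕ) + 1 < (j : ℕ) →
      ¬ G.Adj (p.support.get i) (p.support.get j)) :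
    p.length ≤ ndCount G :=
  induced_path_length_le_nd_general G p hp hind
end

section
/- For any directed graph G, any induced directed path in G has length at most the directed neighborhood diversity dnd(G). -/
/-- Directed neighborhood diversity relation. -/
def dndRel {V : Type*} (E : V → V → Prop) (u v : V) : Prop :=
  ({x | E x u} \ {v} : Set V) = {x | E x v} \ {u} ∧
  ({x | E u x} \ {v} : Set V) = {x | E v x} \ {u} ∧
  (E u v ↔ E v u)

/-- The directed neighborhood diversity: number of dnd-classes. -/
noncomputable def dndCount {V : Type*} (E : V → V → Prop) : ℕ :=
  {S : Set V | ∃ v, S = {u | dndRel E u v}}.ncard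

/-- An induced directed path. -/
def IsInducedDipath {V : Type*} (E : V → V → Prop) (p : List V) : Prop :=
  p.Nodup ∧ p.Chain' E ∧
  ∀ i j : Fin p.length, E (p.get i) (p.get j) → (j : ℕ) = (i : ℕ) + 1

lemma dndRel_refl {V : Type*} (E : V → V → Prop) (v : V) : dndRel E v v :=
  ⟨rfl, rfl, Iff.rfl⟩

lemma dndRel_symm {V : Type*} {E : V → V → Prop} {u v : V} (h : dndRel E u v) :
    dndRel E v u := ⟨h.1.symm, h.2.1.symm, h.2.2.symm⟩

lemma dnd_key {V : Type*} (E : V → V → Prop) (p : List V) (hp : IsInducedDipath E p)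
    (i j : Fin p.length) (hi : (i : ℕ) + 1 < p.length)
    (hij : (i : ℕ) < (j : ℕ)) : ¬ dndRel E (p.get i) (p.get j) := by
  obtain ⟨hnd, hch, hind⟩ := hp
  rintro ⟨h1, h2, h3⟩
  have hchain : E (p.get i) (p.get ⟨(i : ℕ) + 1, hi⟩) := by
    have := List.isChain_iff_getElem.mp hch i (by omega)
    simpa using this
  by_cases hj1 : (j : ℕ) = (i : ℕ) + 1
  · have hjv : p.get j = p.get ⟨(i : ℕ) + 1, hi⟩ := by
      congr 1; exact Fin.ext hj1
    have huv : E (p.get i) (p.get j) := hjv ▸ hchain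
    have hvu : E (p.get j) (p.get i) := h3.mp huv
    have := hind j i hvu
    omega
  · have hne : p.get ⟨(i : ℕ) + 1, hi⟩ ≠ p.get j := by
      intro h
      exact hj1 ((Fin.mk.injEq _ _ _ _ ▸ hnd.get_inj_iff.mp h).symm)
    have hmem : p.get ⟨(i : ℕ) + 1, hi⟩ ∈ ({x | E (p.get i) x} \ {p.get j} : Set V) :=
      ⟨hchain, hne⟩
    rw [h2] at hmem
    have hE : E (p.get j) (p.get ⟨(i : ℕ) + 1, hi⟩) := hmem.1
    have := hind j ⟨(i : ℕ) + 1, hi⟩ hE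
    simp at this
    omega

/-- Any induced directed path has length (number of arcs) at most the directed
neighborhood diversity. -/
theorem induced_dipath_length_le_dnd {V : Type*} [Fintype V] (E : V → V → Prop)
    (hloopless : ∀ v, ¬ E v v) (p : List V) (hp : IsInducedDipath E p) :
    p.length - 1 ≤ dndCount E := by
  classical
  set n := p.length with hn
  set S := {S : Set V | ∃ v, S = {u | dndRel E u v}} with hS
  have hSfin : S.Finite :=
    (Set.finite_range (fun v => {u | dndRel E u v})).subset
      (by rintro s ⟨v, rfl⟩; exact ⟨v, rfl⟩)
  let g : Fin (n - 1) → Set V := fun k =>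
    {u | dndRel E u (p.get ⟨k.val, k.isLt.trans_le (Nat.sub_le n 1)⟩)}
  have hginj : Function.Injective g := by
    intro k k' hkk
    by_contra hne
    have hk : dndRel E (p.get ⟨k.val, k.isLt.trans_le (Nat.sub_le n 1)⟩)
        (p.get ⟨k'.val, k'.isLt.trans_le (Nat.sub_le n 1)⟩) := by
      have hmem : p.get ⟨k.val, k.isLt.trans_le (Nat.sub_le n 1)⟩ ∈ g k :=
        dndRel_refl E _
      rw [hkk] at hmem
      exact hmem
    have hk1 := k.isLt
    have hk2 := k'.isLt
    rcases Nat.lt_trichotomy k.val k'.val with h | h | h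
    · exact dnd_key E p hp _ _ (by simp only [Fin.val_mk]; omega) (by simpa using h) hk
    · exact hne (Fin.ext h)
    · exact dnd_key E p hp _ _ (by simp only [Fin.val_mk]; omega) (by simpa using h) (dndRel_symm hk)
  have hsub : Set.range g ⊆ S := by
    rintro s ⟨k, rfl⟩
    exact ⟨_, rfl⟩
  have hcard : (Set.range g).ncard = n - 1 := by
    rw [← Set.image_univ, Set.ncard_image_of_injective _ hginj, Set.ncard_univ]
    simp
  calc n - 1 = (Set.range g).ncard := hcard.symm
    _ ≤ S.ncard := Set.ncard_le_ncard hsub hSfin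
end

section
/- For every directed graph G, dnd(G) ≤ 4^{vc(U(G))} + vc(U(G)), where vc(U(G)) is the vertex cover number of the underlying undirected graph. -/
/-- The vertex cover number of the underlying undirected graph of `E`. -/
noncomputable def vcNum {V : Type*} [Fintype V] (E : V → V → Prop) : ℕ :=
  sInf {n : ℕ | ∃ C : Finset V,
    (∀ u v, (SimpleGraph.fromRel E).Adj u v → u ∈ C ∨ v ∈ C) ∧ C.card = n}

/-- Pointwise reformulation of `dndRel`. -/
lemma dndRel_iff {V : Type*} (E : V → V → Prop) (u v : V) :
    dndRel E u v ↔
      (∀ x, (E x u ∧ x ≠ v) ↔ (E x v ∧ x ≠ u)) ∧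
      (∀ x, (E u x ∧ x ≠ v) ↔ (E v x ∧ x ≠ u)) ∧
      (E u v ↔ E v u) := by
  unfold dndRel
  rw [Set.ext_iff, Set.ext_iff]
  simp [Set.mem_diff]

/-- One-directional version of the class equality. -/
lemma dnd_transfer {V : Type*} (E : V → V → Prop) (hloopless : ∀ v, ¬ E v v) (u v : V)
    (hne : u ≠ v)
    (hA : ∀ x, E x u ↔ E x v) (hB : ∀ x, E u x ↔ E v x)
    (huv : ¬ E u v) (hvu : ¬ E v u) :
    ∀ w, dndRel E w u → dndRel E w v := by
  intro w hw
  by_cases hwu : w = u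
  · subst hwu
    rw [dndRel_iff]
    refine ⟨?_, ?_, by simp [huv, hvu]⟩
    · intro x
      constructor
      · rintro ⟨h, _⟩
        exact ⟨(hA x).mp h, fun hx => hloopless w (hx ▸ h)⟩
      · rintro ⟨h, _⟩
        exact ⟨(hA x).mpr h, fun hx => hloopless v (hx ▸ h)⟩
    · intro x
      constructor
      · rintro ⟨h, _⟩
        exact ⟨(hB x).mp h, fun hx => hloopless w (hx ▸ h)⟩
      · rintro ⟨h, _⟩
        exact ⟨(hB x).mpr h, fun hx => hloopless v (hx ▸ h)⟩
  · by_cases hwv : w = v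
    · subst hwv; exact dndRel_refl E w
    · rw [dndRel_iff] at hw ⊢
      obtain ⟨h1, h2, _⟩ := hw
      have hvw : ¬ E v w := by
        intro h
        exact hvu ((h1 v).mp ⟨h, fun hx => hne hx.symm⟩).1
      have huw : ¬ E u w := fun h => hvw ((hB w).mp h)
      have hwv' : ¬ E w v := by
        intro h
        exact huv ((h2 v).mp ⟨h, fun hx => hne hx.symm⟩).1
      have hwu' : ¬ E w u := fun h => hwv' ((hA w).mp h)
      refine ⟨?_, ?_, by simp [hwv', hvw]⟩
      · intro x
        by_cases hxu : x = u
        · subst hxu; simp [huw, huv]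
        · constructor
          · rintro ⟨hxw, _⟩
            obtain ⟨hxu', hxw'⟩ := (h1 x).mp ⟨hxw, hxu⟩
            exact ⟨(hA x).mp hxu', hxw'⟩
          · rintro ⟨hxv, hxw⟩
            obtain ⟨hxw', _⟩ := (h1 x).mpr ⟨(hA x).mpr hxv, hxw⟩
            exact ⟨hxw', fun hx => hloopless x (hx ▸ hxv)⟩
      · intro x
        by_cases hxu : x = u
        · subst hxu; simp [hwu', hvu]
        · constructor
          · rintro ⟨hwx, _⟩
            obtain ⟨hux, hxw'⟩ := (h2 x).mp ⟨hwx, hxu⟩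
            exact ⟨(hB x).mp hux, hxw'⟩
          · rintro ⟨hvx, hxw⟩
            obtain ⟨hwx, _⟩ := (h2 x).mpr ⟨(hB x).mpr hvx, hxw⟩
            exact ⟨hwx, fun hx => hloopless x (hx ▸ hvx)⟩

/-- If `u` and `v` have the same in- and out-neighborhoods and are mutually
non-adjacent, then they determine the same dnd class. -/
lemma cls_eq {V : Type*} (E : V → V → Prop) (hloopless : ∀ v, ¬ E v v) (u v : V)
    (hA : ∀ x, E x u ↔ E x v) (hB : ∀ x, E u x ↔ E v x)
    (huv : ¬ E u v) (hvu : ¬ E v u) :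
    {w | dndRel E w u} = {w | dndRel E w v} := by
  by_cases hne : u = v
  · subst hne; rfl
  · ext w
    simp only [Set.mem_setOf_eq]
    constructor
    · exact dnd_transfer E hloopless u v hne hA hB huv hvu w
    · exact dnd_transfer E hloopless v u (Ne.symm hne) (fun x => (hA x).symm)
        (fun x => (hB x).symm) hvu huv w

/-- For every directed graph `G`, `dnd(G) ≤ 4 ^ vc(U(G)) + vc(U(G))`. -/
theorem dnd_le_four_pow_vc_add_vc {V : Type*} [Fintype V] (E : V → V → Prop)
    (hloopless : ∀ v, ¬ E v v) :
    dndCount E ≤ 4 ^ vcNum E + vcNum E := by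
  classical
  have hne : {n : ℕ | ∃ C : Finset V,
      (∀ u v, (SimpleGraph.fromRel E).Adj u v → u ∈ C ∨ v ∈ C) ∧ C.card = n}.Nonempty :=
    ⟨Finset.univ.card, Finset.univ, fun u v _ => Or.inl (Finset.mem_univ u), rfl⟩
  obtain ⟨C, hC, hcard'⟩ := Nat.sInf_mem hne
  have hcard : C.card = vcNum E := hcard'
  set cls : V → Set V := fun v => {u | dndRel E u v} with hcls
  -- vertices outside C have all neighbors inside C
  have hnbr : ∀ v x, v ∉ C → (E x v → x ∈ C) ∧ (E v x → x ∈ C) := by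
    intro v x hv
    constructor
    · intro h
      have hxv : x ≠ v := fun hx => hloopless v (hx ▸ h)
      rcases hC x v ((SimpleGraph.fromRel_adj E x v).mpr ⟨hxv, Or.inl h⟩) with h' | h'
      · exact h'
      · exact absurd h' hv
    · intro h
      have hxv : x ≠ v := fun hx => hloopless v (hx ▸ h)
      rcases hC x v ((SimpleGraph.fromRel_adj E x v).mpr ⟨hxv, Or.inr h⟩) with h' | h'
      · exact h'
      · exact absurd h' hv
  -- the fingerprint of a vertex outside C
  set F : V → (↑C → Bool × Bool) := fun v c => (decide (E ↑c v), decide (E v ↑c)) with hF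
  have hkey : ∀ u v, u ∉ C → v ∉ C → F u = F v → cls u = cls v := by
    intro u v hu hv hFuv
    have hiff : ∀ c : ↑C, (E ↑c u ↔ E ↑c v) ∧ (E u ↑c ↔ E v ↑c) := by
      intro c
      have h := congrFun hFuv c
      rw [hF, Prod.ext_iff] at h
      simp only [decide_eq_decide] at h
      exact h
    have hA : ∀ x, E x u ↔ E x v := by
      intro x
      constructor
      · intro h
        exact (hiff ⟨x, (hnbr u x hu).1 h⟩).1.mp h
      · intro h
        exact (hiff ⟨x, (hnbr v x hv).1 h⟩).1.mpr h
    have hB : ∀ x, E u x ↔ E v x := by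
      intro x
      constructor
      · intro h
        exact (hiff ⟨x, (hnbr u x hu).2 h⟩).2.mp h
      · intro h
        exact (hiff ⟨x, (hnbr v x hv).2 h⟩).2.mpr h
    have huv : ¬ E u v := fun h => hv ((hnbr u v hu).2 h)
    have hvu : ¬ E v u := fun h => hv ((hnbr u v hu).1 h)
    exact cls_eq E hloopless u v hA hB huv hvu
  -- split the set of classes
  have hsplit : {S : Set V | ∃ v, S = cls v} = cls '' ↑C ∪ cls '' (↑C : Set V)ᶜ := by
    ext S
    simp only [Set.mem_setOf_eq, Set.mem_union, Set.mem_image, Set.mem_compl_iff,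
      Finset.mem_coe]
    constructor
    · rintro ⟨v, rfl⟩
      by_cases hv : v ∈ C
      · exact Or.inl ⟨v, hv, rfl⟩
      · exact Or.inr ⟨v, hv, rfl⟩
    · rintro (⟨v, _, rfl⟩ | ⟨v, _, rfl⟩) <;> exact ⟨v, rfl⟩
  have h1 : (cls '' (↑C : Set V)).ncard ≤ vcNum E := by
    calc (cls '' (↑C : Set V)).ncard ≤ (↑C : Set V).ncard :=
          Set.ncard_image_le (Set.toFinite _)
      _ = C.card := Set.ncard_coe_finset C
      _ = vcNum E := hcard
  have h2 : (cls '' (↑C : Set V)ᶜ).ncard ≤ 4 ^ vcNum E := by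
    set g : Set V → (↑C → Bool × Bool) := fun S =>
      if h : S ∈ cls '' (↑C : Set V)ᶜ then F h.choose else default with hg
    have hginj : Set.InjOn g (cls '' (↑C : Set V)ᶜ) := by
      intro S hS S' hS' hgSS'
      rw [hg] at hgSS'
      simp only [dif_pos hS, dif_pos hS'] at hgSS'
      obtain ⟨huS, hSeq⟩ := hS.choose_spec
      obtain ⟨huS', hSeq'⟩ := hS'.choose_spec
      rw [← hSeq, ← hSeq']
      exact hkey _ _ (by simpa using huS) (by simpa using huS') hgSS'
    calc (cls '' (↑C : Set V)ᶜ).ncard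
        = (g '' (cls '' (↑C : Set V)ᶜ)).ncard := (Set.ncard_image_of_injOn hginj).symm
      _ ≤ (Set.univ : Set (↑C → Bool × Bool)).ncard :=
          Set.ncard_le_ncard (Set.subset_univ _) (Set.toFinite _)
      _ = Fintype.card (↑C → Bool × Bool) := by
          rw [Set.ncard_univ, Nat.card_eq_fintype_card]
      _ = 4 ^ vcNum E := by
          rw [Fintype.card_fun, Fintype.card_coe, hcard]
          norm_num
  calc dndCount E = (cls '' ↑C ∪ cls '' (↑C : Set V)ᶜ).ncard := by
        rw [dndCount, ← hsplit]
    _ ≤ (cls '' (↑C : Set V)).ncard + (cls '' (↑C : Set V)ᶜ).ncard :=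
        Set.ncard_union_le _ _
    _ ≤ 4 ^ vcNum E + vcNum E := by omega
end

section
/- If an undirected graph G contains a set X of at least 2k vertices each of degree at least 2k, then G has a matching of size at least k. -/
/-- If `G` contains a set `X` of at least `2k` vertices, each of degree at least
`2k`, then `G` has a matching of size at least `k` (covering at least `2k`
vertices). -/
theorem many_high_degree_vertices_gives_matching {V : Type*} [Fintype V]
    (G : SimpleGraph V) [DecidableRel G.Adj] (k : ℕ) (X : Set V)
    (hX : 2 * k ≤ X.ncard) (hdeg : ∀ v ∈ X, 2 * k ≤ G.degree v) :
    ∃ M : G.Subgraph, M.IsMatching ∧ 2 * k ≤ M.verts.ncard := by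
  induction k with
  | zero =>
      exact ⟨⊥, fun v hv => absurd hv (by simp [SimpleGraph.Subgraph.verts_bot]),
        by simp⟩
  | succ k ih =>
      obtain ⟨M, hM, hMcard⟩ := ih (le_trans (by omega) hX)
        (fun v hv => le_trans (by omega) (hdeg v hv))
      by_cases hbig : 2 * (k + 1) ≤ M.verts.ncard
      · exact ⟨M, hM, hbig⟩
      push_neg at hbig
      -- find u ∈ X not covered by M
      have hXM : ¬ X ⊆ M.verts := by
        intro hsub
        have := Set.ncard_le_ncard hsub (Set.toFinite _)
        omega
      obtain ⟨u, huX, huM⟩ := Set.not_subset.mp hXM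
      -- find a neighbor v of u not covered by M
      have hdu : 2 * (k + 1) ≤ (G.neighborSet u).ncard := by
        rw [Set.ncard_eq_toFinset_card', Set.toFinset_card, G.card_neighborSet_eq_degree]
        exact hdeg u huX
      have hNM : ¬ G.neighborSet u ⊆ M.verts := by
        intro hsub
        have := Set.ncard_le_ncard hsub (Set.toFinite _)
        omega
      obtain ⟨v, hvN, hvM⟩ := Set.not_subset.mp hNM
      have hadj : G.Adj u v := hvN
      refine ⟨M ⊔ G.subgraphOfAdj hadj, ?_, ?_⟩
      · refine hM.sup (SimpleGraph.Subgraph.IsMatching.subgraphOfAdj hadj) ?_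
        rw [hM.support_eq_verts, SimpleGraph.support_subgraphOfAdj]
        rw [Set.disjoint_iff]
        rintro x ⟨hx1, hx2⟩
        rcases hx2 with rfl | rfl
        · exact huM hx1
        · exact hvM hx1
      · have hverts : (M ⊔ G.subgraphOfAdj hadj).verts = insert u (insert v M.verts) := by
          simp [SimpleGraph.Subgraph.verts_sup]
        rw [hverts]
        have hne : u ≠ v := hadj.ne
        rw [Set.ncard_insert_of_notMem (by simp [huM, hne]) (Set.toFinite _),
          Set.ncard_insert_of_notMem hvM (Set.toFinite _)]
        omega
end
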